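/- Let k ≥ 3 and p ≥ 1 be integers and let a, b, c, d ∈ ℝ with b > 0 and a + c < 1. Suppose that (i) W_k(a,b,c,d) is positive semidefinite, (ii) 2b + 2c − d ≤ 1, and (iii) both w_{k−1}((a−c)/b, d/b) and w_{k−1}((a−c)/(1−a−c), (b−a+c)/(1−a−c)) belong to LS+^{p−1}(H_{k−1}). Then w_k(a,b) ∈ LS+^p(H_k). -/

import Mathlib

open Finset

noncomputable section

/-- `cone(P)`: the homogenization of `P`, indexed by `Option V` with `none` playing
the role of the `0` coordinate. -/
def lsCone {V : Type*} (P : Set (V → ℝ)) : Set (Option V → ℝ) :=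
  {y | ∃ (lam : ℝ) (x : V → ℝ), 0 ≤ lam ∧ x ∈ P ∧
    y = fun o => o.elim lam (fun v => lam * x v)}

/-- The lift `LŜ₊(P)`: symmetric PSD matrices `Y` indexed by `Option V`
with `Y e₀ = diag Y` and all columns conditions. -/
def lsLift {V : Type*} [Fintype V] [DecidableEq V] (P : Set (V → ℝ)) :
    Set (Matrix (Option V) (Option V) ℝ) :=
  {Y | Y.PosSemidef ∧ Y.mulVec (Pi.single none 1) = Matrix.diag Y ∧
      ∀ v : V, Y.mulVec (Pi.single (some v) 1) ∈ lsCone P ∧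
        Y.mulVec (Pi.single none 1 - Pi.single (some v) 1) ∈ lsCone P}

/-- The Lovász–Schrijver operator `LS₊`. -/
def lsPlus {V : Type*} [Fintype V] [DecidableEq V] (P : Set (V → ℝ)) : Set (V → ℝ) :=
  {x | ∃ Y ∈ lsLift P, Y.mulVec (Pi.single none 1) = fun o => o.elim 1 x}

/-- The fractional stable set polytope. -/
def FRAC {V : Type*} (G : SimpleGraph V) : Set (V → ℝ) :=
  {x | (∀ v, 0 ≤ x v ∧ x v ≤ 1) ∧ ∀ u v, G.Adj u v → x u + x v ≤ 1}

/-- The stable set polytope: convex hull of incidence vectors of stable sets. -/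
def STAB {V : Type*} (G : SimpleGraph V) : Set (V → ℝ) :=
  convexHull ℝ {x | ∃ S : Set V, (∀ u ∈ S, ∀ v ∈ S, ¬ G.Adj u v) ∧
    x = S.indicator fun _ => (1 : ℝ)}

/-- The graph `H_k`, on vertex set `Fin k × Fin 3` (vertex `i_p` is `(i, p)`). -/
def Hgraph (k : ℕ) : SimpleGraph (Fin k × Fin 3) :=
  SimpleGraph.fromRel (fun a b =>
    (a.1 = b.1 ∧ ((a.2 = 0 ∧ b.2 = 1) ∨ (a.2 = 1 ∧ b.2 = 2))) ∨
    (a.1 ≠ b.1 ∧ a.2 = 0 ∧ b.2 = 2))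

/-- The vector `w_k(a,b)`: entry `a` on `[k]₀ ∪ [k]₂` and `b` on `[k]₁`. -/
def wVec (k : ℕ) (a b : ℝ) : Fin k × Fin 3 → ℝ := fun v => if v.2 = 1 then b else a

/-- The certificate matrix `W_k(a,b,c,d)`, indexed by `Option (Fin k × Fin 3)`
with `none` playing the role of the index `0`. -/
def Wmat (k : ℕ) (a b c d : ℝ) :
    Matrix (Option (Fin k × Fin 3)) (Option (Fin k × Fin 3)) ℝ :=
  fun r s =>
    match r, s with
    | none, none => 1
    | none, some v => if v.2 = 1 then b else a
    | some v, none => if v.2 = 1 then b else a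
    | some v, some u =>
      if v.1 = u.1 then
        (if v.2 = u.2 then (if v.2 = 1 then b else a)
         else if v.2 ≠ 1 ∧ u.2 ≠ 1 then a - c else 0)
      else
        (if v.2 = u.2 then (if v.2 = 1 then d else c)
         else if v.2 = 1 ∨ u.2 = 1 then a - c else 0)

/-!
The matrix `W_k(a,b,c,d)` is itself the `LS₊` certificate for `w_k(a,b)`: its column `Y e₀` is
`(1, w_k(a,b))` and equals its diagonal, so it remains to write every column `Y eᵥ` and
`Y (e₀ - eᵥ)` as a nonnegative combination of vectors `(1, x)` with `x ∈ LS₊^{p-1}(H_k)`.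
Two kinds of points suffice: incidence vectors of stable sets of `H_k`, which lie in every
`LS₊` iterate, and the two points of `LS₊^{p-1}(H_{k-1})` given by (iii) with a block `i`
inserted as `(0,1,0)` or `(0,0,0)`. These lie in `LS₊^{p-1}(H_k)` because fixing coordinates to
`0`/`1` and relabelling the others is a linear map `N` of homogenised vectors that maps
`cone(FRAC(H_{k-1}))` into `cone(FRAC(H_k))`, and if `Y` certifies `x` then `N Y Nᵀ` certifies the
image of `x`. The coefficients are nonnegative by (ii), by `c ≥ 0` (from (i)) and by the
inequalities `0 ≤ a - c`, `a - c + d ≤ b ≤ 1 - a - c` that (iii) forces.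
-/

open Matrix

lemma Matrix.PosSemidef.apply_add_apply_le {n : Type*} [Fintype n] [DecidableEq n]
    {M : Matrix n n ℝ} (hM : M.PosSemidef) (u v : n) : M u v + M v u ≤ M u u + M v v := by
  have h := hM.dotProduct_mulVec_nonneg (Pi.single u 1 - Pi.single v 1)
  simp [mulVec_sub, sub_dotProduct, dotProduct_sub] at h
  linarith

section LovaszSchrijver

variable {V : Type*}

def homog (x : V → ℝ) : Option V → ℝ := fun o => o.elim 1 x

@[simp] lemma homog_none (x : V → ℝ) : homog x none = 1 := rfl

@[simp] lemma homog_some (x : V → ℝ) (v : V) : homog x (some v) = x v := rfl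

lemma mem_lsCone_iff {P : Set (V → ℝ)} {y : Option V → ℝ} :
    y ∈ lsCone P ↔ ∃ lam : ℝ, 0 ≤ lam ∧ ∃ x ∈ P, y = lam • homog x := by
  constructor
  · rintro ⟨lam, x, hlam, hx, rfl⟩
    exact ⟨lam, hlam, x, hx, by ext (_ | v) <;> simp⟩
  · rintro ⟨lam, hlam, x, hx, rfl⟩
    exact ⟨lam, x, hlam, hx, by ext (_ | v) <;> simp⟩

lemma smul_homog_mem_lsCone {P : Set (V → ℝ)} {lam : ℝ} {x : V → ℝ} (hlam : 0 ≤ lam)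
    (hx : x ∈ P) : lam • homog x ∈ lsCone P :=
  mem_lsCone_iff.2 ⟨lam, hlam, x, hx, rfl⟩

lemma lsCone_smul {P : Set (V → ℝ)} {θ : ℝ} (hθ : 0 ≤ θ) {y : Option V → ℝ}
    (hy : y ∈ lsCone P) : θ • y ∈ lsCone P := by
  obtain ⟨lam, hlam, x, hx, rfl⟩ := mem_lsCone_iff.1 hy
  simpa [smul_smul] using smul_homog_mem_lsCone (mul_nonneg hθ hlam) hx

lemma lsCone_add {P : Set (V → ℝ)} (hP : Convex ℝ P) {y z : Option V → ℝ}
    (hy : y ∈ lsCone P) (hz : z ∈ lsCone P) : y + z ∈ lsCone P := by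
  obtain ⟨l₁, hl₁, x₁, hx₁, rfl⟩ := mem_lsCone_iff.1 hy
  obtain ⟨l₂, hl₂, x₂, hx₂, rfl⟩ := mem_lsCone_iff.1 hz
  rcases hl₁.eq_or_lt with rfl | hl₁
  · simpa using hz
  rcases hl₂.eq_or_lt with rfl | hl₂
  · simpa using hy
  have hx : (l₁ / (l₁ + l₂)) • x₁ + (l₂ / (l₁ + l₂)) • x₂ ∈ P :=
    hP hx₁ hx₂ (by positivity) (by positivity) (by field_simp)
  convert smul_homog_mem_lsCone (lam := l₁ + l₂) (by positivity) hx using 1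
  ext (_ | v)
  · simp
  · simp; field_simp

variable [Fintype V] [DecidableEq V]

lemma lsPlus_subset [Nonempty V] {P : Set (V → ℝ)} (hP : Convex ℝ P) : lsPlus P ⊆ P := by
  rintro x ⟨Y, ⟨-, -, hcols⟩, hYx⟩
  obtain ⟨v⟩ := ‹Nonempty V›
  obtain ⟨hcol, hcompl⟩ := hcols v
  obtain ⟨l₁, hl₁, y₁, hy₁, h₁⟩ := mem_lsCone_iff.1 hcol
  obtain ⟨l₂, hl₂, y₂, hy₂, h₂⟩ := mem_lsCone_iff.1 hcompl
  -- `Y e₀ = Y eᵥ + Y (e₀ - eᵥ)`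
  have hsplit : homog x = l₁ • homog y₁ + l₂ • homog y₂ := by
    rw [← h₁, ← h₂, ← mulVec_add, add_sub_cancel, hYx]; rfl
  have hsum : l₁ + l₂ = 1 := by simpa using (congrFun hsplit none).symm
  have hx : x = l₁ • y₁ + l₂ • y₂ := by
    ext u; simpa using congrFun hsplit (some u)
  exact hx ▸ hP hy₁ hy₂ hl₁ hl₂ hsum

lemma lsPlus_convex {P : Set (V → ℝ)} (hP : Convex ℝ P) : Convex ℝ (lsPlus P) := by
  rintro x ⟨Y, ⟨hY, hdiag, hcols⟩, hYx⟩ x' ⟨Y', ⟨hY', hdiag', hcols'⟩, hYx'⟩ s t hs ht hst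
  refine ⟨s • Y + t • Y', ⟨(hY.smul hs).add (hY'.smul ht), ?_, fun v => ⟨?_, ?_⟩⟩, ?_⟩
  · rw [add_mulVec, smul_mulVec, smul_mulVec, hdiag, hdiag']
    rfl
  · rw [add_mulVec, smul_mulVec, smul_mulVec]
    exact lsCone_add hP (lsCone_smul hs (hcols v).1) (lsCone_smul ht (hcols' v).1)
  · rw [add_mulVec, smul_mulVec, smul_mulVec]
    exact lsCone_add hP (lsCone_smul hs (hcols v).2) (lsCone_smul ht (hcols' v).2)
  · rw [add_mulVec, smul_mulVec, smul_mulVec, hYx, hYx']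
    ext (_ | u) <;> simp [hst]

lemma convex_iterate_lsPlus {P : Set (V → ℝ)} (hP : Convex ℝ P) (n : ℕ) :
    Convex ℝ (lsPlus^[n] P) := by
  induction n with
  | zero => exact hP
  | succ n ih => rw [Function.iterate_succ_apply']; exact lsPlus_convex ih

lemma iterate_lsPlus_subset [Nonempty V] {P : Set (V → ℝ)} (hP : Convex ℝ P) (n : ℕ) :
    lsPlus^[n] P ⊆ P := by
  induction n with
  | zero => exact subset_rfl
  | succ n ih =>
    rw [Function.iterate_succ_apply']
    exact (lsPlus_subset (convex_iterate_lsPlus hP n)).trans ih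

lemma mem_lsPlus_of_binary {P : Set (V → ℝ)} {x : V → ℝ} (hx : x ∈ P)
    (h01 : ∀ v, x v = 0 ∨ x v = 1) : x ∈ lsPlus P := by
  have hsq : ∀ o, homog x o * homog x o = homog x o := by
    rintro (_ | v) <;> [simp; rcases h01 v with h | h <;> simp [h]]
  have hcol : ∀ o, vecMulVec (homog x) (homog x) *ᵥ Pi.single o 1 = homog x o • homog x :=
    fun o => by ext r; simp [vecMulVec_apply, mul_comm]
  have hx0 : ∀ v, 0 ≤ x v ∧ 0 ≤ 1 - x v := fun v => by rcases h01 v with h | h <;> simp [h]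
  refine ⟨vecMulVec (homog x) (homog x), ⟨?_, ?_, fun v => ⟨?_, ?_⟩⟩, ?_⟩
  · simpa using posSemidef_vecMulVec_self_star (homog x)
  · ext o; simp [hcol, vecMulVec_apply, hsq]
  · rw [hcol]
    exact smul_homog_mem_lsCone (hx0 v).1 hx
  · rw [mulVec_sub, hcol, hcol, homog_none, ← sub_smul]
    exact smul_homog_mem_lsCone (hx0 v).2 hx
  · rw [hcol]; ext o; simp [homog]

lemma mem_iterate_lsPlus_of_binary {P : Set (V → ℝ)} {x : V → ℝ} (hx : x ∈ P)
    (h01 : ∀ v, x v = 0 ∨ x v = 1) (n : ℕ) : x ∈ lsPlus^[n] P := by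
  induction n with
  | zero => exact hx
  | succ n ih => rw [Function.iterate_succ_apply']; exact mem_lsPlus_of_binary ih h01

end LovaszSchrijver

section Substitution

variable {V W : Type*} (e : V → Option (Option W))

/-- `e v = none` fixes the coordinate `v` to `0`, `e v = some none` fixes it to `1`, and
`e v = some (some w)` copies the coordinate `w`. -/
def substitute (x : W → ℝ) : V → ℝ := fun v => (e v).elim 0 (homog x)

def homogIdx : Option V → Option (Option W) := fun o => o.elim (some none) e

variable [DecidableEq W]

def substMatrix : Matrix (Option V) (Option W) ℝ :=
  Matrix.of fun o r => if homogIdx e o = some r then 1 else 0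

lemma transpose_substMatrix_mulVec_single [Fintype V] [DecidableEq V] (o : Option V) :
    (substMatrix e)ᵀ *ᵥ Pi.single o 1 = (homogIdx e o).elim 0 (Pi.single · 1) := by
  ext r
  rcases h : homogIdx e o with _ | r' <;> simp [substMatrix, Pi.single_apply, h, eq_comm]

variable [Fintype W]

lemma substMatrix_mulVec (y : Option W → ℝ) :
    substMatrix e *ᵥ y = fun o => (homogIdx e o).elim 0 y := by
  ext o
  rcases h : homogIdx e o with _ | r <;> simp [substMatrix, mulVec, dotProduct, h]

lemma substMatrix_mulVec_homog (x : W → ℝ) :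
    substMatrix e *ᵥ homog x = homog (substitute e x) := by
  rw [substMatrix_mulVec]; ext (_ | v) <;> rfl

variable {e}

lemma substMatrix_mulVec_mem_lsCone {P : Set (W → ℝ)} {Q : Set (V → ℝ)}
    (hPQ : ∀ x ∈ P, substitute e x ∈ Q) {y : Option W → ℝ} (hy : y ∈ lsCone P) :
    substMatrix e *ᵥ y ∈ lsCone Q := by
  obtain ⟨lam, hlam, x, hx, rfl⟩ := mem_lsCone_iff.1 hy
  rw [mulVec_smul, substMatrix_mulVec_homog]
  exact smul_homog_mem_lsCone hlam (hPQ x hx)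

variable [Fintype V] [DecidableEq V]

lemma mulVec_elim_single_mem_lsCone {P : Set (W → ℝ)} {Y : Matrix (Option W) (Option W) ℝ}
    (hY : Y ∈ lsLift P) {x : W → ℝ} (hx : x ∈ P) (hYx : Y *ᵥ Pi.single none 1 = homog x)
    (r : Option (Option W)) :
    Y *ᵥ r.elim 0 (Pi.single · 1) ∈ lsCone P ∧
      Y *ᵥ (Pi.single none 1 - r.elim 0 (Pi.single · 1)) ∈ lsCone P := by
  have h0 : (0 : Option W → ℝ) ∈ lsCone P := by simpa using smul_homog_mem_lsCone le_rfl hx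
  have h1 : homog x ∈ lsCone P := by simpa using smul_homog_mem_lsCone zero_le_one hx
  rcases r with _ | _ | w
  · simpa [hYx] using ⟨h0, h1⟩
  · simpa [hYx] using ⟨h1, h0⟩
  · exact hY.2.2 w

lemma substMatrix_mul_mul_transpose_apply (Y : Matrix (Option W) (Option W) ℝ)
    (o o' : Option V) :
    (substMatrix e * Y * (substMatrix e)ᵀ) o o' =
      (homogIdx e o).elim 0 fun r => (homogIdx e o').elim 0 (Y r) := by
  have h := congrFun (mulVec_single_one (substMatrix e * Y * (substMatrix e)ᵀ) o') o
  rw [← mulVec_mulVec, ← mulVec_mulVec, transpose_substMatrix_mulVec_single,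
    substMatrix_mulVec, col_apply] at h
  rw [← h]
  rcases homogIdx e o' with _ | r' <;>
    simp only [Option.elim, mulVec_zero, mulVec_single_one] <;> rfl

theorem substitute_mem_lsPlus [Nonempty W] {P : Set (W → ℝ)} {Q : Set (V → ℝ)}
    (hP : Convex ℝ P) (hPQ : ∀ x ∈ P, substitute e x ∈ Q) {x : W → ℝ} (hx : x ∈ lsPlus P) :
    substitute e x ∈ lsPlus Q := by
  obtain ⟨Y, hY, hYx⟩ := hx
  have hxP : x ∈ P := lsPlus_subset hP ⟨Y, hY, hYx⟩
  replace hYx : Y *ᵥ Pi.single none 1 = homog x := hYx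
  have hdiag : ∀ r, Y r r = Y r none := fun r => by
    simpa [mulVec_single_one] using (congrFun hY.2.1 r).symm
  have hmulVec : ∀ t, (substMatrix e * Y * (substMatrix e)ᵀ) *ᵥ t =
      substMatrix e *ᵥ (Y *ᵥ ((substMatrix e)ᵀ *ᵥ t)) := fun t => by
    rw [mulVec_mulVec, mulVec_mulVec]
  have hcone := mulVec_elim_single_mem_lsCone hY hxP hYx
  refine ⟨substMatrix e * Y * (substMatrix e)ᵀ, ⟨?_, ?_, fun v => ⟨?_, ?_⟩⟩, ?_⟩
  · simpa [conjTranspose_eq_transpose_of_trivial] using hY.1.mul_mul_conjTranspose_same _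
  · ext o
    rw [mulVec_single_one, col_apply, diag_apply, substMatrix_mul_mul_transpose_apply,
      substMatrix_mul_mul_transpose_apply]
    rcases homogIdx e o with _ | r
    · rfl
    · exact (hdiag r).symm
  · rw [hmulVec, transpose_substMatrix_mulVec_single]
    exact substMatrix_mulVec_mem_lsCone hPQ (hcone (e v)).1
  · rw [hmulVec, mulVec_sub, transpose_substMatrix_mulVec_single,
      transpose_substMatrix_mulVec_single]
    exact substMatrix_mulVec_mem_lsCone hPQ (hcone (e v)).2
  · rw [hmulVec, transpose_substMatrix_mulVec_single]
    exact (congrArg _ hYx).trans (substMatrix_mulVec_homog e x)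

theorem substitute_mem_iterate_lsPlus [Nonempty W] {P : Set (W → ℝ)} {Q : Set (V → ℝ)}
    (hP : Convex ℝ P) (hPQ : ∀ x ∈ P, substitute e x ∈ Q)
    (n : ℕ) : ∀ x ∈ lsPlus^[n] P, substitute e x ∈ lsPlus^[n] Q := by
  induction n with
  | zero => exact hPQ
  | succ n ih =>
    simp only [Function.iterate_succ_apply']
    exact fun x hx => substitute_mem_lsPlus (convex_iterate_lsPlus hP n) ih hx

end Substitution

section StableSets

variable {V : Type*} (G : SimpleGraph V)

lemma convex_FRAC : Convex ℝ (FRAC G) := by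
  intro x hx y hy s t hs ht hst
  refine ⟨fun v => ⟨?_, ?_⟩, fun u v huv => ?_⟩ <;>
    simp only [Pi.add_apply, Pi.smul_apply, smul_eq_mul]
  · nlinarith [hx.1 v, hy.1 v]
  · nlinarith [hx.1 v, hy.1 v]
  · nlinarith [hx.2 u v huv, hy.2 u v huv]

variable {G}

lemma indicator_mem_FRAC {S : Set V} (hS : G.IsIndepSet S) : S.indicator 1 ∈ FRAC G := by
  refine ⟨fun v => ⟨Set.indicator_nonneg (fun _ _ => zero_le_one) v, ?_⟩, fun u v huv => ?_⟩
  · exact Set.indicator_le_self' (fun _ _ => zero_le_one) v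
  · by_cases hu : u ∈ S <;> by_cases hv : v ∈ S
    · exact absurd huv (hS hu hv (G.ne_of_adj huv))
    all_goals simp [hu, hv]

lemma indicator_mem_iterate_lsPlus [Fintype V] [DecidableEq V] {S : Set V}
    (hS : G.IsIndepSet S) (n : ℕ) : S.indicator 1 ∈ lsPlus^[n] (FRAC G) :=
  mem_iterate_lsPlus_of_binary (indicator_mem_FRAC hS)
    (fun v => by by_cases hv : v ∈ S <;> simp [hv]) n

end StableSets

section Hgraph

variable {k : ℕ}

lemma Hgraph_adj_iff {u v : Fin k × Fin 3} :
    (Hgraph k).Adj u v ↔ u.2 ≠ v.2 ∧ (u.1 = v.1 ↔ (u.2 = 1 ∨ v.2 = 1)) := by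
  obtain ⟨i, p⟩ := u
  obtain ⟨j, q⟩ := v
  simp only [Hgraph, SimpleGraph.fromRel_adj, ne_eq, Prod.mk.injEq]
  by_cases hij : i = j <;> fin_cases p <;> fin_cases q <;> simp [hij, eq_comm]

lemma isIndepSet_level (s : Fin 3) : (Hgraph k).IsIndepSet {v | v.2 = s} :=
  fun _ hu _ hv _ huv => (Hgraph_adj_iff.1 huv).1 (hu.trans hv.symm)

lemma isIndepSet_blockEnds_otherMids (i : Fin k) :
    (Hgraph k).IsIndepSet {v | v.1 = i ↔ v.2 ≠ 1} := by
  intro u hu v hv _ huv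
  have := Hgraph_adj_iff.1 huv
  simp only [Set.mem_ofPred_eq] at hu hv
  grind

lemma isIndepSet_otherMids (i : Fin k) : (Hgraph k).IsIndepSet {v | v.1 ≠ i ∧ v.2 = 1} :=
  (isIndepSet_level 1).mono fun _ hv => hv.2

/-- Block `i` of `H_{k+1}` is fixed to `(0, t, 0)`; the other blocks are identified with the
blocks of `H_k` in order. -/
def deleteBlock (i : Fin (k + 1)) (t : Bool) (v : Fin (k + 1) × Fin 3) :
    Option (Option (Fin k × Fin 3)) :=
  if h : v.1 = i then (if t ∧ v.2 = 1 then some none else none)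
  else some (some ((finSuccAboveEquiv i).symm ⟨v.1, h⟩, v.2))

variable {i : Fin (k + 1)} {t : Bool} {y : Fin k × Fin 3 → ℝ} {v : Fin (k + 1) × Fin 3}

lemma substitute_deleteBlock_of_eq (h : v.1 = i) :
    substitute (deleteBlock i t) y v = if t ∧ v.2 = 1 then 1 else 0 := by
  unfold substitute deleteBlock
  split_ifs <;> rfl

lemma substitute_deleteBlock_of_ne (h : v.1 ≠ i) :
    substitute (deleteBlock i t) y v = y ((finSuccAboveEquiv i).symm ⟨v.1, h⟩, v.2) := by
  simp [substitute, deleteBlock, h]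

lemma substitute_deleteBlock_wVec (α β : ℝ) :
    substitute (deleteBlock i t) (wVec k α β) v =
      if v.1 = i then (if t ∧ v.2 = 1 then 1 else 0) else wVec (k + 1) α β v := by
  by_cases h : v.1 = i
  · simp [substitute_deleteBlock_of_eq h, h]
  · simp [substitute_deleteBlock_of_ne h, h, wVec]

lemma substitute_deleteBlock_mem_FRAC (hy : y ∈ FRAC (Hgraph k)) :
    substitute (deleteBlock i t) y ∈ FRAC (Hgraph (k + 1)) := by
  set z := substitute (deleteBlock i t) y with hz
  have hbounds : ∀ w, 0 ≤ z w ∧ z w ≤ 1 := by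
    intro w
    by_cases h : w.1 = i
    · rw [hz, substitute_deleteBlock_of_eq h]; split_ifs <;> norm_num
    · rw [hz, substitute_deleteBlock_of_ne h]; exact hy.1 _
  have hzero : ∀ w : Fin (k + 1) × Fin 3, w.1 = i → w.2 ≠ 1 → z w = 0 :=
    fun w h h1 => by simp [hz, substitute_deleteBlock_of_eq h, h1]
  refine ⟨hbounds, fun u v huv => ?_⟩
  obtain ⟨h2, h1⟩ := Hgraph_adj_iff.1 huv
  by_cases hi : u.1 = i ∨ v.1 = i
  · have : (u.1 = i ∧ u.2 ≠ 1) ∨ (v.1 = i ∧ v.2 ≠ 1) := by grind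
    rcases this with ⟨hu, hu1⟩ | ⟨hv, hv1⟩
    · linarith [hzero u hu hu1, (hbounds v).2]
    · linarith [hzero v hv hv1, (hbounds u).2]
  obtain ⟨hu, hv⟩ := not_or.1 hi
  rw [hz, substitute_deleteBlock_of_ne hu, substitute_deleteBlock_of_ne hv]
  refine hy.2 _ _ (Hgraph_adj_iff.2 ⟨h2, ?_⟩)
  rw [← h1, (finSuccAboveEquiv i).symm.injective.eq_iff, Subtype.mk.injEq]

lemma nonneg_and_add_le_one_of_wVec_mem_FRAC {α β : ℝ}
    (h : wVec (k + 1) α β ∈ FRAC (Hgraph (k + 1))) : 0 ≤ α ∧ α + β ≤ 1 :=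
  ⟨by simpa [wVec] using (h.1 (0, 0)).1,
    by simpa [wVec] using h.2 (0, 0) (0, 1) (Hgraph_adj_iff.2 ⟨by simp, by simp⟩)⟩

lemma substitute_deleteBlock_mem_iterate_lsPlus {m q : ℕ} (i : Fin (m + 2)) (t : Bool)
    {y : Fin (m + 1) × Fin 3 → ℝ} (hy : y ∈ lsPlus^[q] (FRAC (Hgraph (m + 1)))) :
    substitute (deleteBlock i t) y ∈ lsPlus^[q] (FRAC (Hgraph (m + 2))) :=
  substitute_mem_iterate_lsPlus (convex_FRAC _) (fun _ hx => substitute_deleteBlock_mem_FRAC hx)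
    q y hy

end Hgraph

section Certificate

variable {k : ℕ} {a b c d : ℝ}

lemma Wmat_mulVec_single_none : Wmat k a b c d *ᵥ Pi.single none 1 = homog (wVec k a b) := by
  ext (_ | v) <;> simp [Wmat, wVec]

lemma Wmat_mulVec_single_none_eq_diag :
    Wmat k a b c d *ᵥ Pi.single none 1 = diag (Wmat k a b c d) := by
  ext (_ | v) <;> simp [Wmat]

lemma Wmat_col_end (i : Fin k) {s : Fin 3} (hs : s ≠ 1) :
    Wmat k a b c d *ᵥ Pi.single (some (i, s)) 1 =
      c • homog ({v | v.2 = s}.indicator 1) +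
        (a - c) • homog ({v | v.1 = i ↔ v.2 ≠ 1}.indicator 1) := by
  ext (_ | ⟨j, r⟩)
  · simp [Wmat, hs]
  · by_cases hj : j = i <;> fin_cases r <;> fin_cases s <;> simp_all [Wmat]

lemma Wmat_compl_end (i : Fin (k + 1)) {s s' : Fin 3} (hs : s ≠ 1) (hs' : s' ≠ 1) (hss' : s ≠ s')
    (hac : 1 - a - c ≠ 0) :
    Wmat (k + 1) a b c d *ᵥ (Pi.single none 1 - Pi.single (some (i, s)) 1) =
      b • homog (substitute (deleteBlock i true)
          (wVec k ((a - c) / (1 - a - c)) ((b - a + c) / (1 - a - c)))) +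
        (1 - a - c - b) • homog (substitute (deleteBlock i false)
          (wVec k ((a - c) / (1 - a - c)) ((b - a + c) / (1 - a - c)))) +
        c • homog ({v | v.2 = s'}.indicator 1) := by
  ext (_ | ⟨j, r⟩)
  · simp [mulVec_sub, Wmat, hs]
  · by_cases hj : j = i <;> fin_cases r <;> fin_cases s <;> fin_cases s' <;>
      simp_all [mulVec_sub, Wmat, substitute_deleteBlock_wVec, wVec] <;> field_simp <;> ring

lemma Wmat_col_mid (i : Fin (k + 1)) (hb : b ≠ 0) :
    Wmat (k + 1) a b c d *ᵥ Pi.single (some (i, 1)) 1 =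
      b • homog (substitute (deleteBlock i true) (wVec k ((a - c) / b) (d / b))) := by
  ext (_ | ⟨j, r⟩)
  · simp [Wmat]
  · by_cases hj : j = i <;> fin_cases r <;>
      simp_all [Wmat, substitute_deleteBlock_wVec, wVec] <;> field_simp

lemma Wmat_compl_mid (i : Fin k) :
    Wmat k a b c d *ᵥ (Pi.single none 1 - Pi.single (some (i, 1)) 1) =
      (a - c) • homog ({v | v.1 = i ↔ v.2 ≠ 1}.indicator 1) +
        c • homog ({v | v.2 = 0}.indicator 1) + c • homog ({v | v.2 = 2}.indicator 1) +
        (b - d - (a - c)) • homog ({v | v.1 ≠ i ∧ v.2 = 1}.indicator 1) +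
        (1 - 2 * b - 2 * c + d) • homog 0 := by
  ext (_ | ⟨j, r⟩)
  · simp [mulVec_sub, Wmat]; ring
  · by_cases hj : j = i <;> fin_cases r <;> simp_all [mulVec_sub, Wmat]

variable {m q : ℕ}

lemma Wmat_end_mem_lsCone (i : Fin (m + 2)) {s s' : Fin 3} (hs : s ≠ 1) (hs' : s' ≠ 1)
    (hss' : s ≠ s') (hb : 0 < b) (hc : 0 ≤ c) (hac : 0 ≤ a - c) (hb1 : b ≤ 1 - a - c)
    (h4 : wVec (m + 1) ((a - c) / (1 - a - c)) ((b - a + c) / (1 - a - c)) ∈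
      lsPlus^[q] (FRAC (Hgraph (m + 1)))) :
    Wmat (m + 2) a b c d *ᵥ Pi.single (some (i, s)) 1 ∈
        lsCone (lsPlus^[q] (FRAC (Hgraph (m + 2)))) ∧
      Wmat (m + 2) a b c d *ᵥ (Pi.single none 1 - Pi.single (some (i, s)) 1) ∈
        lsCone (lsPlus^[q] (FRAC (Hgraph (m + 2)))) := by
  have hQ := convex_iterate_lsPlus (convex_FRAC (Hgraph (m + 2))) q
  constructor
  · rw [Wmat_col_end i hs]
    exact lsCone_add hQ
      (smul_homog_mem_lsCone hc (indicator_mem_iterate_lsPlus (isIndepSet_level s) q))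
      (smul_homog_mem_lsCone hac
        (indicator_mem_iterate_lsPlus (isIndepSet_blockEnds_otherMids i) q))
  · rw [Wmat_compl_end i hs hs' hss' (by linarith)]
    exact lsCone_add hQ (lsCone_add hQ
      (smul_homog_mem_lsCone hb.le (substitute_deleteBlock_mem_iterate_lsPlus i true h4))
      (smul_homog_mem_lsCone (by linarith) (substitute_deleteBlock_mem_iterate_lsPlus i false h4)))
      (smul_homog_mem_lsCone hc (indicator_mem_iterate_lsPlus (isIndepSet_level s') q))

lemma Wmat_mid_mem_lsCone (i : Fin (m + 2)) (hb : 0 < b) (hc : 0 ≤ c) (hac : 0 ≤ a - c)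
    (hbd : a - c + d ≤ b) (h2 : 2 * b + 2 * c - d ≤ 1)
    (h3 : wVec (m + 1) ((a - c) / b) (d / b) ∈ lsPlus^[q] (FRAC (Hgraph (m + 1)))) :
    Wmat (m + 2) a b c d *ᵥ Pi.single (some (i, 1)) 1 ∈
        lsCone (lsPlus^[q] (FRAC (Hgraph (m + 2)))) ∧
      Wmat (m + 2) a b c d *ᵥ (Pi.single none 1 - Pi.single (some (i, 1)) 1) ∈
        lsCone (lsPlus^[q] (FRAC (Hgraph (m + 2)))) := by
  have hQ := convex_iterate_lsPlus (convex_FRAC (Hgraph (m + 2))) q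
  have h0 : (0 : Fin (m + 2) × Fin 3 → ℝ) ∈ lsPlus^[q] (FRAC (Hgraph (m + 2))) := by
    refine mem_iterate_lsPlus_of_binary ?_ (fun _ => Or.inl rfl) q
    exact ⟨fun _ => by simp, fun _ _ _ => by simp⟩
  constructor
  · rw [Wmat_col_mid i hb.ne']
    exact smul_homog_mem_lsCone hb.le (substitute_deleteBlock_mem_iterate_lsPlus i true h3)
  · rw [Wmat_compl_mid i]
    refine lsCone_add hQ (lsCone_add hQ (lsCone_add hQ (lsCone_add hQ ?_ ?_) ?_) ?_)
      (smul_homog_mem_lsCone (by linarith) h0)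
    · exact smul_homog_mem_lsCone hac
        (indicator_mem_iterate_lsPlus (isIndepSet_blockEnds_otherMids i) q)
    · exact smul_homog_mem_lsCone hc (indicator_mem_iterate_lsPlus (isIndepSet_level 0) q)
    · exact smul_homog_mem_lsCone hc (indicator_mem_iterate_lsPlus (isIndepSet_level 2) q)
    · exact smul_homog_mem_lsCone (by linarith)
        (indicator_mem_iterate_lsPlus (isIndepSet_otherMids i) q)

theorem Wmat_mem_lsLift (hb : 0 < b) (hac : a + c < 1) (h1 : (Wmat (m + 2) a b c d).PosSemidef)
    (h2 : 2 * b + 2 * c - d ≤ 1)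
    (h3 : wVec (m + 1) ((a - c) / b) (d / b) ∈ lsPlus^[q] (FRAC (Hgraph (m + 1))))
    (h4 : wVec (m + 1) ((a - c) / (1 - a - c)) ((b - a + c) / (1 - a - c)) ∈
      lsPlus^[q] (FRAC (Hgraph (m + 1)))) :
    Wmat (m + 2) a b c d ∈ lsLift (lsPlus^[q] (FRAC (Hgraph (m + 2)))) := by
  have hc : 0 ≤ c := by
    have := h1.apply_add_apply_le (some (0, 0)) (some (0, 2))
    simp [Wmat] at this
    linarith
  have hpos : 0 < 1 - a - c := by linarith
  obtain ⟨hac0, hbd⟩ : 0 ≤ a - c ∧ a - c + d ≤ b := by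
    obtain ⟨h, h'⟩ := nonneg_and_add_le_one_of_wVec_mem_FRAC
      (iterate_lsPlus_subset (convex_FRAC _) q h3)
    rw [← add_div, div_le_one hb] at h'
    exact ⟨by simpa using (le_div_iff₀ hb).1 h, h'⟩
  have hb1 : b ≤ 1 - a - c := by
    have h := (nonneg_and_add_le_one_of_wVec_mem_FRAC
      (iterate_lsPlus_subset (convex_FRAC _) q h4)).2
    rwa [← add_div, div_le_one hpos, show a - c + (b - a + c) = b by ring] at h
  refine ⟨h1, Wmat_mulVec_single_none_eq_diag, ?_⟩
  rintro ⟨i, s⟩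
  fin_cases s
  · exact Wmat_end_mem_lsCone i (s' := 2) (by decide) (by decide) (by decide) hb hc hac0 hb1 h4
  · exact Wmat_mid_mem_lsCone i hb hc hac0 hbd h2 h3
  · exact Wmat_end_mem_lsCone i (s' := 0) (by decide) (by decide) (by decide) hb hc hac0 hb1 h4

end Certificate

theorem Hk_recursive_certificate (k p : ℕ) (hk : 3 ≤ k) (hp : 1 ≤ p)
    (a b c d : ℝ) (hb : 0 < b) (hac : a + c < 1)
    (h1 : (Wmat k a b c d).PosSemidef)
    (h2 : 2 * b + 2 * c - d ≤ 1)
    (h3 : wVec (k - 1) ((a - c) / b) (d / b) ∈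
      (lsPlus (V := Fin (k - 1) × Fin 3))^[p - 1] (FRAC (Hgraph (k - 1))))
    (h4 : wVec (k - 1) ((a - c) / (1 - a - c)) ((b - a + c) / (1 - a - c)) ∈
      (lsPlus (V := Fin (k - 1) × Fin 3))^[p - 1] (FRAC (Hgraph (k - 1)))) :
    wVec k a b ∈ (lsPlus (V := Fin k × Fin 3))^[p] (FRAC (Hgraph k)) := by
  obtain ⟨m, rfl⟩ : ∃ m, k = m + 2 := ⟨k - 2, by omega⟩
  obtain ⟨q, rfl⟩ : ∃ q, p = q + 1 := ⟨p - 1, by omega⟩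
  rw [Function.iterate_succ_apply']
  exact ⟨_, Wmat_mem_lsLift hb hac h1 h2 h3 h4, Wmat_mulVec_single_none⟩
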